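/- Let q be a non-integer positive rational such that ℕ₀[q] is atomic (equivalently, 1/q ∉ ℕ≥2). Write q = n/d in lowest terms. Then the set of Betti elements of the additive monoid ℕ₀[q] is exactly {n^{m+1}/d^m : m ∈ ℕ₀}. -/

import Mathlib

/-!
Write `q = n / d`. A factorization of `x ∈ ℕ₀[q]` is a multiset `K` of exponents with
`∑ k ∈ K, q ^ k = x`. If two such multisets have the same value, the difference of their
counting polynomials vanishes at `q`, so by Gauss's lemma it is divisible by `d X - n`; comparing
trailing coefficients (if `d < n`) or leading coefficients (if `n < d`) shows that a
factorization on which no trade `n • q ^ j ↔ d • q ^ (j + 1)` lowers the number of atoms is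
unique. Every factorization reaches this one by such trades, and a trade is an edge of the Betti
graph unless the factorization is a bare block `n • q ^ j` or `d • q ^ (j + 1)`, both worth
`n q ^ j`. Hence the Betti graph of `x` is connected unless `x = n q ^ j`. For `x = n q ^ j` the
block with fewer atoms, `c • q ^ i` with `c = min n d`, is isolated: `(c - 1) q ^ i` has a
unique factorization.
-/

/-- `a` is an (additive) atom of the submonoid `S`. -/
def IsAddAtomIn {R : Type*} [AddCommMonoid R] (S : AddSubmonoid R) (a : R) : Prop :=
  a ∈ S ∧ a ≠ 0 ∧ ∀ u v, u ∈ S → v ∈ S → u ≠ 0 → v ≠ 0 → a ≠ u + v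

/-- Factorizations of `x` into atoms of `S`: multisets of atoms summing to `x`. -/
def Factorizations {R : Type*} [AddCommMonoid R] (S : AddSubmonoid R) (x : R) : Type _ :=
  {l : Multiset R // (∀ a ∈ l, IsAddAtomIn S a) ∧ l.sum = x}

/-- The Betti graph of `x`: vertices are the factorizations of `x`, with an edge between
two distinct factorizations precisely when they share a common atom. -/
def bettiGraph {R : Type*} [AddCommMonoid R] (S : AddSubmonoid R) (x : R) :
    SimpleGraph (Factorizations S x) where
  Adj z z' := z ≠ z' ∧ ∃ a, a ∈ z.1 ∧ a ∈ z'.1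
  symm := ⟨fun z z' h => ⟨h.1.symm, h.2.imp fun a ha => ⟨ha.2, ha.1⟩⟩⟩
  loopless := ⟨fun z h => h.1 rfl⟩

/-- `x` is a Betti element of `S`: `x ∈ S` and its Betti graph is disconnected. -/
def IsBetti {R : Type*} [AddCommMonoid R] (S : AddSubmonoid R) (x : R) : Prop :=
  x ∈ S ∧ ¬ (bettiGraph S x).Connected

open Multiset

section BettiGraphOn
variable {ι R : Type*}

lemma Multiset.exists_map_eq_of_forall_mem_range {f : ι → R} (s : Multiset R)
    (hs : ∀ a ∈ s, a ∈ Set.range f) : ∃ K : Multiset ι, K.map f = s := by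
  induction s using Multiset.induction_on with
  | empty => exact ⟨0, rfl⟩
  | cons a s ih =>
    obtain ⟨i, rfl⟩ := hs a (mem_cons_self _ _)
    obtain ⟨K, rfl⟩ := ih fun b hb => hs b (mem_cons_of_mem hb)
    exact ⟨i ::ₘ K, map_cons _ _ _⟩

variable [AddCommMonoid R]

def bettiGraphOn (f : ι → R) (x : R) : SimpleGraph {K : Multiset ι // (K.map f).sum = x} where
  Adj K K' := K ≠ K' ∧ ∃ i, i ∈ K.1 ∧ i ∈ K'.1
  symm := ⟨fun _ _ h => ⟨h.1.symm, h.2.imp fun _ hi => ⟨hi.2, hi.1⟩⟩⟩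
  loopless := ⟨fun _ h => h.1 rfl⟩

lemma AddSubmonoid.mem_closure_range_iff_exists_multiset {f : ι → R} {x : R} :
    x ∈ AddSubmonoid.closure (Set.range f) ↔ ∃ K : Multiset ι, (K.map f).sum = x := by
  constructor
  · intro hx
    obtain ⟨s, hs, rfl⟩ := AddSubmonoid.exists_multiset_of_mem_closure hx
    obtain ⟨K, rfl⟩ := exists_map_eq_of_forall_mem_range s hs
    exact ⟨K, rfl⟩
  · rintro ⟨K, rfl⟩
    refine AddSubmonoid.multiset_sum_mem _ _ fun a ha => ?_
    obtain ⟨i, -, rfl⟩ := Multiset.mem_map.1 ha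
    exact AddSubmonoid.subset_closure ⟨i, rfl⟩

def Factorizations.ofLabels {S : AddSubmonoid R} {f : ι → R} (hf : ∀ i, IsAddAtomIn S (f i))
    {x : R} (K : {K : Multiset ι // (K.map f).sum = x}) : Factorizations S x :=
  ⟨K.1.map f, fun a ha => by obtain ⟨i, -, rfl⟩ := Multiset.mem_map.1 ha; exact hf i, K.2⟩

lemma Factorizations.ofLabels_injective {S : AddSubmonoid R} {f : ι → R}
    (hf : Function.Injective f) (hfS : ∀ i, IsAddAtomIn S (f i)) {x : R} :
    Function.Injective (ofLabels hfS (x := x)) :=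
  fun _ _ h => Subtype.ext (map_injective hf (congrArg Subtype.val h))

lemma Factorizations.ofLabels_adj_iff {S : AddSubmonoid R} {f : ι → R}
    (hf : Function.Injective f) (hfS : ∀ i, IsAddAtomIn S (f i)) {x : R}
    {K K' : {K : Multiset ι // (K.map f).sum = x}} :
    (bettiGraph S x).Adj (ofLabels hfS K) (ofLabels hfS K') ↔ (bettiGraphOn f x).Adj K K' := by
  simp only [bettiGraph, bettiGraphOn, (ofLabels_injective hf hfS).ne_iff]
  simp only [ofLabels, Multiset.mem_map]
  constructor
  · rintro ⟨hne, _, ⟨i, hi, rfl⟩, ⟨j, hj, hji⟩⟩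
    exact ⟨hne, i, hi, hf hji ▸ hj⟩
  · rintro ⟨hne, i, hi, hi'⟩
    exact ⟨hne, f i, ⟨i, hi, rfl⟩, ⟨i, hi', rfl⟩⟩

noncomputable def bettiGraphOnIso (S : AddSubmonoid R) {f : ι → R} (hf : Function.Injective f)
    (hatom : ∀ a, IsAddAtomIn S a ↔ a ∈ Set.range f) (x : R) :
    bettiGraphOn f x ≃g bettiGraph S x where
  toEquiv := Equiv.ofBijective (Factorizations.ofLabels fun i => (hatom (f i)).2 ⟨i, rfl⟩)
    ⟨Factorizations.ofLabels_injective hf _, fun z => by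
      obtain ⟨K, hK⟩ :=
        exists_map_eq_of_forall_mem_range z.1 fun a ha => (hatom a).1 (z.2.1 a ha)
      exact ⟨⟨K, hK ▸ z.2.2⟩, Subtype.ext hK⟩⟩
  map_rel_iff' := Factorizations.ofLabels_adj_iff hf fun i => (hatom (f i)).2 ⟨i, rfl⟩

end BettiGraphOn

lemma SimpleGraph.IsIsolated.not_connected {V : Type*} {G : SimpleGraph V} {v w : V}
    (hv : G.IsIsolated v) (hvw : v ≠ w) : ¬ G.Connected := fun hG =>
  have := nontrivial_of_ne v w hvw
  hv _ (hG.preconnected.exists_adj_of_nontrivial v).choose_spec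

namespace Polynomial

variable {n d : ℕ}

lemma isPrimitive_C_mul_X_sub_C (hcop : n.Coprime d) :
    (C (d : ℤ) * X - C (n : ℤ)).IsPrimitive := by
  intro r hr
  rw [C_dvd_iff_dvd_coeff] at hr
  exact (Nat.isCoprime_iff_coprime.2 hcop).isUnit_of_dvd' (by simpa using hr 0)
    (by simpa using hr 1)

lemma C_mul_X_sub_C_dvd_of_aeval_eq_zero (hcop : n.Coprime d) {q : ℚ} (hq : d * q = n)
    {h : ℤ[X]} (hh : aeval q h = 0) : C (d : ℤ) * X - C (n : ℤ) ∣ h := by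
  have hd : d ≠ 0 := by
    rintro rfl
    obtain rfl : n = 0 := by simpa using hq.symm
    exact absurd hcop (by decide)
  rw [IsPrimitive.Int.dvd_iff_map_cast_dvd_map_cast _ _ (isPrimitive_C_mul_X_sub_C hcop)]
  have hroot : X - C q ∣ h.map (Int.castRingHom ℚ) := by
    rwa [dvd_iff_isRoot, IsRoot, ← algebraMap_int_eq, eval_map_algebraMap]
  have hmap :
      (C (d : ℤ) * X - C (n : ℤ)).map (Int.castRingHom ℚ) = C (d : ℚ) * (X - C q) := by
    rw [mul_sub, ← C_mul, hq]; simp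
  rw [hmap]
  exact (isUnit_C.2 (IsUnit.mk0 _ (Nat.cast_ne_zero.2 hd))).mul_left_dvd.2 hroot

lemma eq_zero_of_dvd_of_natAbs_coeff_lt {h : ℤ[X]}
    (hdvd : C (d : ℤ) * X - C (n : ℤ) ∣ h)
    (hlt : ∀ j, (h.coeff j).natAbs < n) : h = 0 := by
  by_contra h0
  obtain ⟨z, rfl⟩ := hdvd
  have hn : n ≠ 0 := by have := hlt 0; omega
  have htc : (C (d : ℤ) * X - C (n : ℤ)).trailingCoeff = -(n : ℤ) := by
    rw [trailingCoeff_eq_coeff_zero] <;> simp [hn]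
  have := Int.natAbs_le_of_dvd_ne_zero (Dvd.intro _ (trailingCoeff_mul _ z).symm)
    (trailingCoeff_nonzero_iff_nonzero.2 h0)
  rw [htc, Int.natAbs_neg, Int.natAbs_natCast] at this
  exact (hlt _).not_ge this

lemma eq_zero_of_dvd_of_natAbs_coeff_succ_lt {h : ℤ[X]}
    (hdvd : C (d : ℤ) * X - C (n : ℤ) ∣ h)
    (hlt : ∀ j, (h.coeff (j + 1)).natAbs < d) : h = 0 := by
  by_contra h0
  obtain ⟨z, rfl⟩ := hdvd
  rw [sub_eq_add_neg, ← C_neg] at hlt h0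
  have hd : (d : ℤ) ≠ 0 := by have := hlt 0; omega
  have hz : z ≠ 0 := by rintro rfl; simp at h0
  have hp : C (d : ℤ) * X + C (-(n : ℤ)) ≠ 0 :=
    ne_zero_of_natDegree_gt (n := 0) (by rw [natDegree_linear hd]; omega)
  have hdeg : ((C (d : ℤ) * X + C (-(n : ℤ))) * z).natDegree = z.natDegree + 1 := by
    rw [natDegree_mul hp hz, natDegree_linear hd, add_comm]
  have := Int.natAbs_le_of_dvd_ne_zero (Dvd.intro _ (leadingCoeff_mul _ z).symm)
    (leadingCoeff_ne_zero.2 h0)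
  rw [leadingCoeff_linear hd, leadingCoeff, hdeg, Int.natAbs_natCast] at this
  exact (hlt _).not_ge this

noncomputable def countPoly (K : Multiset ℕ) : ℤ[X] := (K.map (X ^ ·)).sum

@[simp] lemma coeff_countPoly (K : Multiset ℕ) (j : ℕ) : (countPoly K).coeff j = K.count j := by
  induction K using Multiset.induction_on with
  | empty => simp [countPoly]
  | cons k K ih =>
    simp only [countPoly, Multiset.map_cons, Multiset.sum_cons, coeff_add, coeff_X_pow] at ih ⊢
    rw [ih, Multiset.count_cons]
    split_ifs <;> push_cast <;> ring

lemma aeval_countPoly (q : ℚ) (K : Multiset ℕ) :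
    aeval q (countPoly K) = (K.map (q ^ ·)).sum := by
  simp [countPoly, map_multiset_sum, Multiset.map_map]

end Polynomial

section PowerMonoid

open Polynomial

variable {q : ℚ} {n d : ℕ} {K K' : Multiset ℕ}

lemma C_mul_X_sub_C_dvd_countPoly_sub (hcop : n.Coprime d) (hq : d * q = n)
    (h : (K.map (q ^ ·)).sum = (K'.map (q ^ ·)).sum) :
    C (d : ℤ) * X - C (n : ℤ) ∣ countPoly K - countPoly K' :=
  C_mul_X_sub_C_dvd_of_aeval_eq_zero hcop hq <| by
    rw [map_sub, aeval_countPoly, aeval_countPoly, h, sub_self]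

lemma eq_of_countPoly_sub_eq_zero (h : countPoly K - countPoly K' = 0) : K = K' :=
  Multiset.ext.2 fun j => by simpa [sub_eq_zero] using congrArg (coeff · j) h

theorem eq_of_sum_pow_eq_of_count_lt (hcop : n.Coprime d) (hq : d * q = n)
    (h : (K.map (q ^ ·)).sum = (K'.map (q ^ ·)).sum) (hK : ∀ j, K.count j < n)
    (hK' : ∀ j, K'.count j < n) : K = K' :=
  eq_of_countPoly_sub_eq_zero <| eq_zero_of_dvd_of_natAbs_coeff_lt
    (C_mul_X_sub_C_dvd_countPoly_sub hcop hq h) fun j => by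
      have := hK j; have := hK' j; simp only [coeff_sub, coeff_countPoly]; omega

theorem eq_of_sum_pow_eq_of_count_succ_lt (hcop : n.Coprime d) (hq : d * q = n)
    (h : (K.map (q ^ ·)).sum = (K'.map (q ^ ·)).sum) (hK : ∀ j, K.count (j + 1) < d)
    (hK' : ∀ j, K'.count (j + 1) < d) : K = K' :=
  eq_of_countPoly_sub_eq_zero <| eq_zero_of_dvd_of_natAbs_coeff_succ_lt
    (C_mul_X_sub_C_dvd_countPoly_sub hcop hq h) fun j => by
      have := hK j; have := hK' j; simp only [coeff_sub, coeff_countPoly]; omega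

lemma pos_of_natCast_mul_eq (hq : d * q = n) (hn : 0 < n) : 0 < q :=
  pos_of_mul_pos_right (hq ▸ Nat.cast_pos.2 hn) d.cast_nonneg

lemma sum_map_pow_pos (hq0 : 0 < q) (hK : K ≠ 0) : 0 < (K.map (q ^ ·)).sum := by
  obtain ⟨i, hi⟩ := exists_mem_of_ne_zero hK
  obtain ⟨K', rfl⟩ := exists_cons_of_mem hi
  simp only [map_cons, sum_cons]
  exact add_pos_of_pos_of_nonneg (pow_pos hq0 i)
    (sum_nonneg fun a ha => by obtain ⟨j, -, rfl⟩ := Multiset.mem_map.1 ha; positivity)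

lemma mul_pow_eq_mul_pow_succ (hq : d * q = n) (j : ℕ) : n * q ^ j = d * q ^ (j + 1) := by
  rw [← hq, pow_succ]; ring

def Trade (n d : ℕ) (K K' : Multiset ℕ) : Prop :=
  ∃ A j, (K = A + replicate n j ∧ K' = A + replicate d (j + 1)) ∨
    (K = A + replicate d (j + 1) ∧ K' = A + replicate n j)

lemma Trade.symm (h : Trade n d K K') : Trade n d K' K := by
  obtain ⟨A, j, h | h⟩ := h
  exacts [⟨A, j, Or.inr h.symm⟩, ⟨A, j, Or.inl h.symm⟩]

lemma Trade.sum_pow_eq (hq : d * q = n) (h : Trade n d K K') :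
    (K'.map (q ^ ·)).sum = (K.map (q ^ ·)).sum := by
  obtain ⟨A, j, ⟨rfl, rfl⟩ | ⟨rfl, rfl⟩⟩ := h <;>
    simp [nsmul_eq_mul, mul_pow_eq_mul_pow_succ hq]

lemma Trade.min_le_card (h : Trade n d K K') : min n d ≤ card K := by
  obtain ⟨A, j, ⟨rfl, -⟩ | ⟨rfl, -⟩⟩ := h <;> simp

lemma Trade.exists_mem_mem (hq : d * q = n) (h : Trade n d K K')
    (hK : ∀ j, (K.map (q ^ ·)).sum ≠ n * q ^ j) : ∃ i, i ∈ K ∧ i ∈ K' := by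
  obtain ⟨A, j, ⟨rfl, rfl⟩ | ⟨rfl, rfl⟩⟩ := h
  all_goals
    obtain ⟨i, hi⟩ := exists_mem_of_ne_zero (s := A) (by
      rintro rfl
      exact hK j (by simp [nsmul_eq_mul, mul_pow_eq_mul_pow_succ hq]))
    exact ⟨i, by simp [hi]⟩

def IsTradeReduced (n d : ℕ) (K : Multiset ℕ) : Prop :=
  ∀ K', Trade n d K K' → card K ≤ card K'

lemma IsTradeReduced.count_lt (hdn : d < n) (hK : IsTradeReduced n d K) (j : ℕ) :
    K.count j < n := by
  by_contra! h
  rw [le_count_iff_replicate_le] at h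
  have := hK _ ⟨K - replicate n j, j, Or.inl ⟨(tsub_add_cancel_of_le h).symm, rfl⟩⟩
  have := card_le_card h
  simp only [card_add, card_sub h, card_replicate] at *
  omega

lemma IsTradeReduced.count_succ_lt (hnd : n < d) (hK : IsTradeReduced n d K) (j : ℕ) :
    K.count (j + 1) < d := by
  by_contra! h
  rw [le_count_iff_replicate_le] at h
  have := hK _ ⟨K - replicate d (j + 1), j, Or.inr ⟨(tsub_add_cancel_of_le h).symm, rfl⟩⟩
  have := card_le_card h
  simp only [card_add, card_sub h, card_replicate] at *
  omega

theorem IsTradeReduced.eq_of_sum_pow_eq (hcop : n.Coprime d) (hq : d * q = n) (hnd : n ≠ d)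
    (hK : IsTradeReduced n d K) (hK' : IsTradeReduced n d K')
    (h : (K.map (q ^ ·)).sum = (K'.map (q ^ ·)).sum) : K = K' := by
  rcases hnd.lt_or_gt with hlt | hlt
  · exact eq_of_sum_pow_eq_of_count_succ_lt hcop hq h (hK.count_succ_lt hlt)
      (hK'.count_succ_lt hlt)
  · exact eq_of_sum_pow_eq_of_count_lt hcop hq h (hK.count_lt hlt) (hK'.count_lt hlt)

lemma exists_trade_card_lt (hK : ¬ IsTradeReduced n d K) :
    ∃ K', Trade n d K K' ∧ card K' < card K := by
  simpa [IsTradeReduced] using hK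

theorem eq_replicate_of_sum_pow_eq (hcop : n.Coprime d) (hq : d * q = n) (hnd : n ≠ d)
    {c k : ℕ} (hc : c < min n d) (K : Multiset ℕ) (hK : (K.map (q ^ ·)).sum = c * q ^ k) :
    K = replicate c k := by
  have hrep : IsTradeReduced n d (replicate c k) := fun K' h => by
    have := h.min_le_card; rw [card_replicate] at this; omega
  induction hcard : card K using Nat.strong_induction_on generalizing K with
  | _ N IH =>
  by_cases hred : IsTradeReduced n d K
  · exact hred.eq_of_sum_pow_eq hcop hq hnd hrep (by simpa [nsmul_eq_mul] using hK)
  · obtain ⟨K', hKK', hlt⟩ := exists_trade_card_lt hred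
    obtain rfl := IH _ (hcard ▸ hlt) K' (by rw [hKK'.sum_pow_eq hq, hK]) rfl
    have := hKK'.symm.min_le_card; rw [card_replicate] at this; omega

variable {x : ℚ}

lemma Trade.adj (hq : d * q = n) (hx : ∀ j, x ≠ n * q ^ j)
    {K K' : {K : Multiset ℕ // (K.map (q ^ ·)).sum = x}} (h : Trade n d K.1 K'.1)
    (hcard : card K'.1 < card K.1) : (bettiGraphOn (q ^ ·) x).Adj K K' :=
  ⟨fun hKK' => (hKK' ▸ hcard).false, h.exists_mem_mem hq fun j hj => hx j (K.2.symm.trans hj)⟩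

lemma exists_isTradeReduced_reachable (hq : d * q = n) (hx : ∀ j, x ≠ n * q ^ j)
    (K : {K : Multiset ℕ // (K.map (q ^ ·)).sum = x}) :
    ∃ R, IsTradeReduced n d R.1 ∧ (bettiGraphOn (q ^ ·) x).Reachable K R := by
  induction hcard : card K.1 using Nat.strong_induction_on generalizing K with
  | _ N IH =>
  by_cases hred : IsTradeReduced n d K.1
  · exact ⟨K, hred, .rfl⟩
  · obtain ⟨K', hKK', hlt⟩ := exists_trade_card_lt hred
    let K'' : {K : Multiset ℕ // (K.map (q ^ ·)).sum = x} := ⟨K', hKK'.sum_pow_eq hq ▸ K.2⟩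
    obtain ⟨R, hR, hK''R⟩ := IH _ (hcard ▸ hlt) K'' rfl
    exact ⟨R, hR, (Trade.adj hq hx (K' := K'') hKK' hlt).reachable.trans hK''R⟩

theorem bettiGraphOn_pow_connected (hcop : n.Coprime d) (hq : d * q = n) (hnd : n ≠ d)
    (hx : ∀ j, x ≠ n * q ^ j) (hne : ∃ K : Multiset ℕ, (K.map (q ^ ·)).sum = x) :
    (bettiGraphOn (q ^ ·) x).Connected := by
  obtain ⟨K₀, hK₀⟩ := hne
  obtain ⟨R₀, hR₀, -⟩ := exists_isTradeReduced_reachable hq hx ⟨K₀, hK₀⟩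
  refine (SimpleGraph.connected_iff_exists_forall_reachable _).2 ⟨R₀, fun K => ?_⟩
  obtain ⟨R, hR, hKR⟩ := exists_isTradeReduced_reachable hq hx K
  obtain rfl : R = R₀ :=
    Subtype.ext (hR.eq_of_sum_pow_eq hcop hq hnd hR₀ (R.2.trans R₀.2.symm))
  exact hKR.symm

lemma bettiGraphOn_pow_isIsolated_replicate (hcop : n.Coprime d) (hq : d * q = n) (hnd : n ≠ d)
    {c i : ℕ} (hc0 : c ≠ 0) (hc : c ≤ min n d) :
    (bettiGraphOn (q ^ ·) (c * q ^ i)).IsIsolated ⟨replicate c i, by simp [nsmul_eq_mul]⟩ := by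
  rintro K ⟨hne, j, hj, hjK⟩
  obtain rfl := eq_of_mem_replicate hj
  obtain ⟨c, rfl⟩ := Nat.exists_eq_succ_of_ne_zero hc0
  have hK := K.2
  rw [← cons_erase hjK] at hK
  have hrest : ((K.1.erase j).map (q ^ ·)).sum = c * q ^ j := by
    simp only [map_cons, sum_cons] at hK
    push_cast at hK
    linarith
  refine hne (Subtype.ext ?_)
  rw [← cons_erase hjK, eq_replicate_of_sum_pow_eq hcop hq hnd (by omega) _ hrest]
  exact replicate_succ j c

theorem bettiGraphOn_pow_not_connected (hcop : n.Coprime d) (hq : d * q = n) (hnd : n ≠ d)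
    (hn : n ≠ 0) (m : ℕ) : ¬ (bettiGraphOn (q ^ ·) (n * q ^ m)).Connected := by
  rcases hnd.lt_or_gt with hlt | hlt
  · refine (bettiGraphOn_pow_isIsolated_replicate (c := n) hcop hq hnd hn (by omega)).not_connected
      (w := ⟨replicate d (m + 1), by simp [nsmul_eq_mul, mul_pow_eq_mul_pow_succ hq]⟩) ?_
    exact fun h => hlt.ne (by simpa using congrArg (card ∘ Subtype.val) h)
  · have hd : d ≠ 0 := by rintro rfl; exact hn (by simpa using hq.symm)
    rw [mul_pow_eq_mul_pow_succ hq]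
    refine (bettiGraphOn_pow_isIsolated_replicate (c := d) hcop hq hnd hd (by omega)).not_connected
      (w := ⟨replicate n m, by simp [nsmul_eq_mul, mul_pow_eq_mul_pow_succ hq]⟩) ?_
    exact fun h => hlt.ne (by simpa using congrArg (card ∘ Subtype.val) h)

theorem isAddAtomIn_closure_pow_iff (hcop : n.Coprime d) (hq : d * q = n) (hn : 1 < n)
    (hd : 1 < d) (a : ℚ) :
    IsAddAtomIn (AddSubmonoid.closure (Set.range (q ^ ·))) a ↔ a ∈ Set.range (q ^ ·) := by
  have hq0 := pos_of_natCast_mul_eq hq (by omega)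
  simp only [IsAddAtomIn, AddSubmonoid.mem_closure_range_iff_exists_multiset]
  constructor
  · rintro ⟨⟨K, rfl⟩, ha0, hsplit⟩
    obtain ⟨i, hi⟩ := exists_mem_of_ne_zero (s := K) (by rintro rfl; exact ha0 (by simp))
    obtain ⟨K', rfl⟩ := exists_cons_of_mem hi
    refine ⟨i, ?_⟩
    by_contra hK'
    refine hsplit (q ^ i) _ ⟨{i}, by simp⟩ ⟨K', rfl⟩ (pow_pos hq0 i).ne' ?_ (by simp)
    exact (sum_map_pow_pos hq0 (by rintro rfl; simp at hK')).ne'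
  · rintro ⟨k, rfl⟩
    refine ⟨⟨{k}, by simp⟩, (pow_pos hq0 k).ne', ?_⟩
    rintro _ _ ⟨Ku, rfl⟩ ⟨Kv, rfl⟩ hu hv heq
    have hcard := congrArg card (eq_replicate_of_sum_pow_eq (c := 1) (k := k) hcop hq (by
      rintro rfl; exact hn.ne' ((Nat.coprime_self n).1 hcop)) (by omega) (Ku + Kv)
      (by simpa using heq.symm))
    have hKu : Ku ≠ 0 := by rintro rfl; simp at hu
    have hKv : Kv ≠ 0 := by rintro rfl; simp at hv
    simp only [card_add, card_replicate] at hcard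
    have := card_pos.2 hKu
    have := card_pos.2 hKv
    omega

theorem isBetti_closure_pow_iff (hcop : n.Coprime d) (hq : d * q = n) (hn : 1 < n) (hd : 1 < d) :
    IsBetti (AddSubmonoid.closure (Set.range (q ^ ·))) x ↔ ∃ m : ℕ, x = n * q ^ m := by
  have hnd : n ≠ d := by rintro rfl; exact hn.ne' ((Nat.coprime_self n).1 hcop)
  have hq1 : q ≠ 1 := by rintro rfl; exact hnd (by simpa using hq.symm)
  have hinj := pow_right_injective₀ (pos_of_natCast_mul_eq hq (by omega)) hq1
  rw [IsBetti, AddSubmonoid.mem_closure_range_iff_exists_multiset,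
    ← (bettiGraphOnIso _ hinj (isAddAtomIn_closure_pow_iff hcop hq hn hd) x).connected_iff]
  constructor
  · rintro ⟨hx, hdisc⟩
    by_contra! hxn
    exact hdisc (bettiGraphOn_pow_connected hcop hq hnd hxn hx)
  · rintro ⟨m, rfl⟩
    exact ⟨⟨replicate n m, by simp [nsmul_eq_mul]⟩,
      bettiGraphOn_pow_not_connected hcop hq hnd (by omega) m⟩

end PowerMonoid

lemma Rat.num_pow_succ_div_den_pow (q : ℚ) (m : ℕ) :
    (q.num : ℚ) ^ (m + 1) / (q.den : ℚ) ^ m = q.num * q ^ m := by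
  rw [← Rat.den_mul_eq_num]
  field_simp
  ring

/-- Let `q` be a non-integer positive rational with `ℕ₀[q]` atomic (equivalently
`1/q ∉ ℕ≥2`), `q = n/d` in lowest terms. The set of Betti elements of `ℕ₀[q]` is exactly
`{n^{m+1}/d^m : m ∈ ℕ₀}`. -/
theorem stmt_16 (q : ℚ) (hq : 0 < q) (hqint : ¬ ∃ m : ℤ, q = (m : ℚ))
    (hq2 : ¬ ∃ m : ℕ, 2 ≤ m ∧ q⁻¹ = (m : ℚ))
    (M : AddSubmonoid ℚ)
    (hM : M = AddSubmonoid.closure (Set.range fun k : ℕ => q ^ k)) :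
    {x | IsBetti M x} = {x : ℚ | ∃ m : ℕ, x = (q.num : ℚ) ^ (m + 1) / (q.den : ℚ) ^ m} := by
  have hnum : ((q.num.natAbs : ℕ) : ℚ) = q.num := by
    rw [Nat.cast_natAbs, Int.cast_abs, abs_of_pos (Int.cast_pos.2 (Rat.num_pos.2 hq))]
  have hdq : (q.den : ℚ) * q = q.num.natAbs := by rw [hnum, Rat.den_mul_eq_num]
  have hd : 1 < q.den :=
    lt_of_le_of_ne q.pos fun h => hqint ⟨q.num, (Rat.coe_int_num_of_den_eq_one h.symm).symm⟩
  have hn : 1 < q.num.natAbs := by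
    refine lt_of_le_of_ne (Int.natAbs_pos.2 (Rat.num_pos.2 hq).ne') fun h => hq2 ⟨q.den, hd, ?_⟩
    rw [← h, Nat.cast_one] at hdq
    exact inv_eq_of_mul_eq_one_left hdq
  subst hM
  ext x
  simp only [Set.mem_ofPred_eq, isBetti_closure_pow_iff q.reduced hdq hn hd,
    Rat.num_pow_succ_div_den_pow, hnum]
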